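/- Let d ≥ 1 and let L = {L_i}_{i=1}^{d²} be a measure basis for d×d complex matrices with all weights l_i = tr L_i strictly positive, Gram matrix G, bias matrix A = diag(l_i), Born matrix Φ = AG^{-1}, and √Φ := A^{1/2}(A^{1/2}G^{-1}A^{1/2})^{1/2}A^{-1/2}. For nonzero real t, let L^t be the collinear measure basis L^t_i := t·L_i + (1−t)·(l_i/d)·I, with Born matrix Φ^t and square root √(Φ^t) defined analogously from its Gram matrix and bias matrix. Let J be the d²×d² all-ones matrix. Then Φ^t = (1/t²)Φ + (1 − 1/t²)·(1/d)·AJ and √(Φ^t) = (1/|t|)√Φ + (1 − 1/|t|)·(1/d)·AJ. -/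

import Mathlib

open Matrix BigOperators
open scoped ComplexOrder Kronecker

/-- A measure basis: a linearly independent family of `d²` Hermitian `d×d` complex
matrices summing to the identity, with nonnegative traces. -/
def IsMeasureBasis {d : ℕ} (L : Fin (d ^ 2) → Matrix (Fin d) (Fin d) ℂ) : Prop :=
  (∀ i, (L i).IsHermitian) ∧ LinearIndependent ℝ L ∧ (∑ i, L i) = 1 ∧ ∀ i, 0 ≤ ((L i).trace).re

/-- A Wigner basis: an orthogonal measure basis. -/
def IsWignerBasis {d : ℕ} (L : Fin (d ^ 2) → Matrix (Fin d) (Fin d) ℂ) : Prop :=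
  IsMeasureBasis L ∧ ∀ i j, i ≠ j → (L i * L j).trace = 0

/-- The rescaled frame operator `S_L(X) = ∑ⱼ (tr(X Lⱼ)/lⱼ) Lⱼ`. -/
noncomputable def rsFrameOp {n : Type*} [Fintype n] {m : Type*} [Fintype m] [DecidableEq m]
    (L : n → Matrix m m ℂ) (X : Matrix m m ℂ) : Matrix m m ℂ :=
  ∑ j, (((X * L j).trace) / ((L j).trace)) • L j

/-- A map on matrices that is ℝ-linear, Hermiticity-preserving, self-adjoint with respect to
the Hilbert–Schmidt inner product on Hermitian matrices, and positive. -/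
def IsPosSelfAdjMap {m : Type*} [Fintype m]
    (T : Matrix m m ℂ → Matrix m m ℂ) : Prop :=
  IsLinearMap ℝ T ∧ (∀ X, X.IsHermitian → (T X).IsHermitian) ∧
  (∀ X Y, X.IsHermitian → Y.IsHermitian → (T X * Y).trace = (X * T Y).trace) ∧
  (∀ X, X.IsHermitian → 0 ≤ ((X * T X).trace).re)

/-- `T` is the (unique) positive self-adjoint inverse square root of the rescaled frame
operator of `L`, i.e. `S_L ∘ T ∘ T = id` on Hermitian matrices; `PW(L) i = T (L i)`. -/
def IsInvSqrtOfFrameOp {n : Type*} [Fintype n] {m : Type*} [Fintype m] [DecidableEq m]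
    (L : n → Matrix m m ℂ) (T : Matrix m m ℂ → Matrix m m ℂ) : Prop :=
  IsPosSelfAdjMap T ∧ ∀ X : Matrix m m ℂ, X.IsHermitian → rsFrameOp L (T (T X)) = X

/-!
Since `∑ Lᵢ = 1`, the Gram matrix sends the all-ones vector to the weight vector `l`
(`G J = A J`, `J A J = d J`), and the Gram matrix of `Lᵗ` is the rank-one perturbation
`t² G + (1 - t²)/d · l lᵀ`; its inverse is `t⁻² G⁻¹ + (1 - t⁻²)/d · J`, which gives `Φᵗ`.
Conjugating by `A^{1/2}`, the positive square roots `B`, `Bᵗ` of `A^{1/2} G⁻¹ A^{1/2}` and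
`A^{1/2} (Gᵗ)⁻¹ A^{1/2}` satisfy `Bᵗ² = t⁻² B² + (1 - t⁻²) P`, where `P` is the orthogonal
projection onto `√l` and `B² P = P`. Hence `B` fixes `P` as well, so
`|t|⁻¹ B + (1 - |t|⁻¹) P` is a positive semidefinite square root of `Bᵗ²`, and by uniqueness of
such roots it equals `Bᵗ`.
-/
namespace Matrix

section AllOnes

variable {n R : Type*} [Fintype n] [DecidableEq n] [CommSemiring R]

theorem mul_allOnes_eq_diagonal_mul_allOnes {G : Matrix n n R} {w : n → R}
    (hG : ∀ i, ∑ k, G i k = w i) :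
    G * of (fun _ _ => (1 : R)) = diagonal w * of (fun _ _ => (1 : R)) := by
  ext i j
  simp [mul_apply, diagonal_apply, hG]

theorem allOnes_mul_eq_allOnes_mul_diagonal {G : Matrix n n R} {w : n → R}
    (hG : ∀ j, ∑ k, G k j = w j) :
    of (fun _ _ => (1 : R)) * G = of (fun _ _ => (1 : R)) * diagonal w := by
  ext i j
  simp [mul_apply, diagonal_apply, hG]

theorem allOnes_mul_diagonal_mul_allOnes (w : n → R) :
    of (fun _ _ => (1 : R)) * diagonal w * of (fun _ _ => (1 : R)) =
      (∑ i, w i) • of (fun _ _ => (1 : R)) := by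
  ext i j
  simp [mul_apply, diagonal_apply]

theorem diagonal_mul_allOnes_mul_diagonal (v w : n → R) :
    diagonal v * of (fun _ _ => (1 : R)) * diagonal w = vecMulVec v w := by
  ext i j
  simp [mul_apply, diagonal_apply, vecMulVec_apply]

end AllOnes

section TraceGram

variable {m ι : Type*} [Fintype m] [DecidableEq m]

/-- For Hermitian `L`, the real Gram matrix for the Hilbert–Schmidt product
`⟪X, Y⟫ = tr (Y Xᴴ)`. -/
def traceGram (L : ι → Matrix m m ℂ) : Matrix ι ι ℝ :=
  of fun i j => ((L i * L j).trace).re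

noncomputable def collinearFamily (L : ι → Matrix m m ℂ) (t : ℝ) (i : ι) : Matrix m m ℂ :=
  t • L i + ((1 - t) * ((L i).trace).re / Fintype.card m) • 1

theorem traceGram_collinearFamily (L : ι → Matrix m m ℂ) (t : ℝ)
    (hm : (Fintype.card m : ℝ) ≠ 0) :
    traceGram (collinearFamily L t) = t ^ 2 • traceGram L +
      ((1 - t ^ 2) * (Fintype.card m : ℝ)⁻¹) •
        vecMulVec (fun i => ((L i).trace).re) (fun i => ((L i).trace).re) := by
  ext i j
  simp only [traceGram, collinearFamily, of_apply, add_mul, mul_add, smul_mul_smul_comm,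
    Matrix.mul_one, Matrix.one_mul, trace_add, trace_smul, trace_one, Complex.add_re,
    Complex.real_smul, Complex.re_ofReal_mul, Complex.natCast_re, add_apply, smul_apply,
    vecMulVec_apply, smul_eq_mul]
  field_simp
  ring

variable [Fintype ι]

theorem posDef_traceGram {L : ι → Matrix m m ℂ} (hH : ∀ i, (L i).IsHermitian)
    (hL : LinearIndependent ℝ L) : (traceGram L).PosDef := by
  let : NormedAddCommGroup (Matrix m m ℂ) := toMatrixNormedAddCommGroup 1 PosDef.one
  let : InnerProductSpace ℂ (Matrix m m ℂ) := toMatrixInnerProductSpace 1 PosDef.one.posSemidef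
  let : InnerProductSpace ℝ (Matrix m m ℂ) := InnerProductSpace.rclikeToReal ℂ _
  have hgram : gram ℝ L = traceGram L := by
    ext i j
    change (L j * 1 * (L i)ᴴ).trace.re = _
    rw [mul_one, (hH i).eq, trace_mul_comm]
    rfl
  exact hgram ▸ posDef_gram_of_linearIndependent hL

variable {L : ι → Matrix m m ℂ} (hL : ∑ k, L k = 1)
include hL

theorem sum_traceGram_apply (i : ι) : ∑ k, traceGram L i k = ((L i).trace).re := by
  simp only [traceGram, of_apply]
  rw [← Complex.re_sum, ← trace_sum, ← Finset.mul_sum, hL, Matrix.mul_one]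

variable [DecidableEq ι]

theorem traceGram_mul_allOnes :
    traceGram L * of (fun _ _ => 1) = diagonal (fun i => ((L i).trace).re) * of (fun _ _ => 1) :=
  mul_allOnes_eq_diagonal_mul_allOnes (sum_traceGram_apply hL)

theorem allOnes_mul_traceGram :
    of (fun _ _ => 1) * traceGram L = of (fun _ _ => 1) * diagonal (fun i => ((L i).trace).re) :=
  allOnes_mul_eq_allOnes_mul_diagonal fun j => by
    simpa only [traceGram, of_apply, trace_mul_comm (L _) (L j)] using sum_traceGram_apply hL j

theorem allOnes_mul_diagonal_re_trace_mul_allOnes :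
    of (fun _ _ => 1) * diagonal (fun i => ((L i).trace).re) * of (fun _ _ => 1) =
      (Fintype.card m : ℝ) • of (fun _ _ => (1 : ℝ)) := by
  rw [allOnes_mul_diagonal_mul_allOnes, ← Complex.re_sum, ← trace_sum, hL, trace_one,
    Complex.natCast_re]

end TraceGram

section CollinearInverse

variable {n K : Type*} [Fintype n] [DecidableEq n] [Field K] {G A J : Matrix n n K} {d : K}

theorem inv_smul_add_smul_mul_mul (hG : IsUnit G.det) (hd : d ≠ 0) {a : K} (ha : a ≠ 0)
    (hGJ : G * J = A * J) (hJG : J * G = J * A) (hJAJ : J * A * J = d • J) :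
    (a • G + ((1 - a) * d⁻¹) • (A * J * A))⁻¹ = a⁻¹ • G⁻¹ + ((1 - a⁻¹) * d⁻¹) • J := by
  refine inv_eq_right_inv ?_
  have hAJA : A * J * A * G⁻¹ = A * J := by
    rw [Matrix.mul_assoc A J, ← hJG, ← Matrix.mul_assoc, Matrix.mul_assoc _ G,
      mul_nonsing_inv G hG, Matrix.mul_one]
  have hAJAJ : A * J * A * J = d • (A * J) := by
    rw [show A * J * A * J = A * (J * A * J) by simp only [Matrix.mul_assoc], hJAJ,
      Matrix.mul_smul]
  simp only [Matrix.add_mul, Matrix.mul_add, smul_mul_smul_comm, mul_nonsing_inv G hG, hGJ,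
    hAJA, hAJAJ, smul_smul]
  have hcoeff : (1 - a) * d⁻¹ * a⁻¹ + (a * ((1 - a⁻¹) * d⁻¹) +
      (1 - a) * d⁻¹ * ((1 - a⁻¹) * d⁻¹) * d) = 0 := by
    field_simp
    ring
  rw [mul_inv_cancel₀ ha, one_smul, add_assoc, ← add_smul, ← add_smul, hcoeff, zero_smul,
    add_zero]

end CollinearInverse

section SquareRoot

variable {n 𝕜 : Type*} [Fintype n] [DecidableEq n] [RCLike 𝕜]

theorem PosSemidef.mul_eq_of_mul_self_mul_eq {B X : Matrix n n 𝕜} (hB : B.PosSemidef)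
    (h : B * B * X = X) : B * X = X := by
  have hB1 : IsUnit (B + 1) := (PosDef.posSemidef_add hB PosDef.one).isUnit
  refine hB1.mul_left_cancel ?_
  rw [Matrix.add_mul, Matrix.add_mul, ← Matrix.mul_assoc, h, Matrix.one_mul, Matrix.one_mul,
    add_comm]

open scoped MatrixOrder in
theorem PosSemidef.eq_of_mul_self_eq_mul_self {B C : Matrix n n 𝕜} (hB : B.PosSemidef)
    (hC : C.PosSemidef) (h : B * B = C * C) : B = C :=
  (CFC.mul_self_eq_mul_self_iff B C hB.nonneg hC.nonneg).mp h

theorem smul_add_one_sub_smul_mul_self {R S : Type*} [CommRing S] [Ring R] [Algebra S R]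
    {B P : R} (hBP : B * P = P) (hPB : P * B = P) (hPP : P * P = P) (s : S) :
    (s • B + (1 - s) • P) * (s • B + (1 - s) • P) = s ^ 2 • (B * B) + (1 - s ^ 2) • P := by
  simp only [add_mul, mul_add, smul_mul_smul_comm, hBP, hPB, hPP]
  module

theorem PosSemidef.smul_add_one_sub_smul {B P : Matrix n n 𝕜} (hB : B.PosSemidef)
    (hP : P.PosSemidef) (hBP : B * P = P) (hPB : P * B = P) (hPP : P * P = P) {s : ℝ}
    (hs : 0 ≤ s) : (s • B + (1 - s) • P).PosSemidef := by
  have hBP' : B - P = (1 - P)ᴴ * B * (1 - P) := by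
    rw [conjTranspose_sub, conjTranspose_one, hP.isHermitian.eq, Matrix.sub_mul,
      Matrix.one_mul, hPB, Matrix.sub_mul, Matrix.mul_sub, Matrix.mul_sub, Matrix.mul_one,
      Matrix.mul_one, hBP, hPP]
    abel
  have hsplit : s • B + (1 - s) • P = s • (B - P) + P := by module
  rw [hsplit, hBP']
  exact ((hB.conjTranspose_mul_mul_same _).smul hs).add hP

theorem PosSemidef.eq_smul_add_one_sub_smul_of_mul_self_eq {B C P : Matrix n n 𝕜}
    (hB : B.PosSemidef) (hC : C.PosSemidef) (hP : P.PosSemidef) (hPP : P * P = P)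
    (hBBP : B * B * P = P) {s : ℝ} (hs : 0 ≤ s)
    (hCC : C * C = s ^ 2 • (B * B) + (1 - s ^ 2) • P) : C = s • B + (1 - s) • P := by
  have hBP : B * P = P := hB.mul_eq_of_mul_self_mul_eq hBBP
  have hPB : P * B = P := by
    simpa [hB.isHermitian.eq, hP.isHermitian.eq] using congrArg (·ᴴ) hBP
  refine hC.eq_of_mul_self_eq_mul_self (hB.smul_add_one_sub_smul hP hBP hPB hPP hs) ?_
  rw [hCC, smul_add_one_sub_smul_mul_self hBP hPB hPP]

end SquareRoot

section BornSquareRoot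

variable {n : Type*} [Fintype n] [DecidableEq n]

theorem diagonal_sqrt_mul_diagonal_sqrt {w : n → ℝ} (hw : ∀ i, 0 ≤ w i) :
    diagonal (fun i => √(w i)) * diagonal (fun i => √(w i)) = diagonal w := by
  rw [diagonal_mul_diagonal]
  exact congrArg diagonal (funext fun i => Real.mul_self_sqrt (hw i))

theorem diagonal_sqrt_mul_diagonal_inv_sqrt {w : n → ℝ} (hw : ∀ i, 0 < w i) :
    diagonal (fun i => √(w i)) * diagonal (fun i => (√(w i))⁻¹) = 1 := by
  rw [diagonal_mul_diagonal, ← diagonal_one]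
  exact congrArg diagonal (funext fun i => mul_inv_cancel₀ (Real.sqrt_pos.mpr (hw i)).ne')

theorem conj_sqrt_collinear_inv_eq {G A J S S' B C : Matrix n n ℝ} {d s : ℝ}
    (hG : IsUnit G.det) (hd : 0 < d) (hs : 0 ≤ s) (hGJ : G * J = A * J)
    (hJAJ : J * A * J = d • J) (hSS : S * S = A) (hSS' : S * S' = 1)
    (hSJS : (S * J * S).PosSemidef) (hB : B.PosSemidef) (hBB : B * B = S * G⁻¹ * S)
    (hC : C.PosSemidef) (hCC : C * C = S * (s ^ 2 • G⁻¹ + ((1 - s ^ 2) * d⁻¹) • J) * S) :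
    S * C * S' = s • (S * B * S') + ((1 - s) * d⁻¹) • (A * J) := by
  set P := d⁻¹ • (S * J * S) with hP
  have hGinvAJ : G⁻¹ * (A * J) = J := by
    rw [← hGJ, ← Matrix.mul_assoc, nonsing_inv_mul G hG, Matrix.one_mul]
  have hPP : P * P = P := by
    rw [hP, smul_mul_smul_comm, show S * J * S * (S * J * S) = S * (J * (S * S) * J) * S by
      simp only [Matrix.mul_assoc], hSS, hJAJ, Matrix.mul_smul, Matrix.smul_mul, smul_smul,
      mul_assoc, inv_mul_cancel₀ hd.ne', mul_one]
  have hBBP : B * B * P = P := by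
    rw [hBB, hP, Matrix.mul_smul, show S * G⁻¹ * S * (S * J * S) = S * (G⁻¹ * (S * S * J)) * S by
      simp only [Matrix.mul_assoc], hSS, hGinvAJ]
  have hCC' : C * C = s ^ 2 • (B * B) + (1 - s ^ 2) • P := by
    rw [hCC, hBB, hP, smul_smul, Matrix.mul_add, Matrix.add_mul, Matrix.mul_smul,
      Matrix.mul_smul, Matrix.smul_mul, Matrix.smul_mul, Matrix.mul_assoc S G⁻¹]
  rw [hB.eq_smul_add_one_sub_smul_of_mul_self_eq hC (hSJS.smul (inv_nonneg.mpr hd.le)) hPP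
    hBBP hs hCC', smul_smul, Matrix.mul_add, Matrix.add_mul, Matrix.mul_smul,
    Matrix.mul_smul, Matrix.smul_mul, Matrix.smul_mul,
    show S * (S * J * S) * S' = S * S * J * (S * S') by simp only [Matrix.mul_assoc], hSS, hSS',
    Matrix.mul_one]

end BornSquareRoot

end Matrix

/-- for the collinear measure basis `Lᵗ`, the Born matrix and its positive
square root satisfy `Φᵗ = (1/t²)Φ + (1 − 1/t²)(1/d)AJ` and
`√(Φᵗ) = (1/|t|)√Φ + (1 − 1/|t|)(1/d)AJ`. -/
theorem collinear_born_matrix {d : ℕ} [NeZero d]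
    (L : Fin (d ^ 2) → Matrix (Fin d) (Fin d) ℂ)
    (hL : IsMeasureBasis L) (hpos : ∀ i, 0 < ((L i).trace).re)
    (t : ℝ) (ht : t ≠ 0)
    (Lt : Fin (d ^ 2) → Matrix (Fin d) (Fin d) ℂ)
    (hLt : ∀ i, Lt i = t • L i +
      (((1 - t) * ((L i).trace).re / (d : ℝ)) • (1 : Matrix (Fin d) (Fin d) ℂ)))
    (G Gt A Asq AsqInv B Bt J : Matrix (Fin (d ^ 2)) (Fin (d ^ 2)) ℝ)
    (hG : ∀ i j, G i j = ((L i * L j).trace).re)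
    (hGt : ∀ i j, Gt i j = ((Lt i * Lt j).trace).re)
    (hA : A = Matrix.diagonal fun i => ((L i).trace).re)
    (hAsq : Asq = Matrix.diagonal fun i => Real.sqrt (((L i).trace).re))
    (hAsqInv : AsqInv = Matrix.diagonal fun i => (Real.sqrt (((L i).trace).re))⁻¹)
    (hBpsd : B.PosSemidef) (hBsq : B * B = Asq * G⁻¹ * Asq)
    (hBtpsd : Bt.PosSemidef) (hBtsq : Bt * Bt = Asq * Gt⁻¹ * Asq)
    (hJ : J = Matrix.of fun _ _ => (1 : ℝ)) :
    A * Gt⁻¹ = (1 / t ^ 2) • (A * G⁻¹) + ((1 - 1 / t ^ 2) * (d : ℝ)⁻¹) • (A * J) ∧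
    Asq * Bt * AsqInv =
      (1 / |t|) • (Asq * B * AsqInv) + ((1 - 1 / |t|) * (d : ℝ)⁻¹) • (A * J) := by
  obtain ⟨hH, hli, hsum, -⟩ := hL
  have hd : (0 : ℝ) < d := Nat.cast_pos.mpr (NeZero.pos d)
  obtain rfl : G = traceGram L := Matrix.ext hG
  obtain rfl : Lt = collinearFamily L t := funext fun i => by
    simpa only [collinearFamily, Fintype.card_fin] using hLt i
  obtain rfl : Gt = traceGram (collinearFamily L t) := Matrix.ext hGt
  subst hA hJ hAsq hAsqInv
  have hGdet := (isUnit_iff_isUnit_det _).mp (posDef_traceGram hH hli).isUnit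
  have hJAJ := allOnes_mul_diagonal_re_trace_mul_allOnes hsum
  rw [Fintype.card_fin] at hJAJ
  have hGt := traceGram_collinearFamily L t (by simpa using hd.ne')
  rw [Fintype.card_fin, ← diagonal_mul_allOnes_mul_diagonal] at hGt
  have hGtinv := hGt ▸ inv_smul_add_smul_mul_mul hGdet hd.ne' (pow_ne_zero 2 ht)
    (traceGram_mul_allOnes hsum) (allOnes_mul_traceGram hsum) hJAJ
  refine ⟨by rw [hGtinv, Matrix.mul_add, Matrix.mul_smul, Matrix.mul_smul, one_div], ?_⟩
  have hs : (1 / |t|) ^ 2 = (t ^ 2)⁻¹ := by rw [one_div, inv_pow, sq_abs]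
  rw [← hs] at hGtinv
  exact conj_sqrt_collinear_inv_eq hGdet hd (by positivity)
    (traceGram_mul_allOnes hsum) hJAJ (diagonal_sqrt_mul_diagonal_sqrt fun i => (hpos i).le)
    (diagonal_sqrt_mul_diagonal_inv_sqrt hpos)
    (by rw [diagonal_mul_allOnes_mul_diagonal]; exact posSemidef_vecMulVec_self_star _)
    hBpsd hBsq hBtpsd (hGtinv ▸ hBtsq)
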